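/- arXiv:2302.02654 — 4 statements merged into one kernel-verified Lean document; each statement's English description precedes it below -/
import Mathlib

section
/- Let H = -i Σ_{μ,ν} α_{μν} c_μ c_ν where α is a real antisymmetric 2n×2n matrix and the c_μ satisfy the Clifford relations {c_μ, c_ν} = 2δ_{μν}I. Then for U = e^{iH} and every μ, U† c_μ U = Σ_ν R_{μν} c_ν where R = e^{4α} is a matrix in SO(2n). -/
/-!
With real coefficients, `A := iH = ∑ α_{μν} c_μ c_ν`. The Clifford relations give
`c_ρ A - A c_ρ = 4 ∑_ν α_{ρν} c_ν`, so the derivation `X ↦ X A - A X` preserves the span of the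
`c_ν` and acts on it by the matrix `4α`. Its exponential `X ↦ e^{-A} X e^{A}` therefore sends
`c_μ` to `∑_ν (e^{4α})_{μν} c_ν`, and `e^{-A} = U†` because `A` is skew-Hermitian.
Finally `(e^{4α})ᵀ = e^{-4α}`, and `det e^{4α} = (det e^{2α})² ≥ 0` rules out determinant `-1`.
-/

open NormedSpace Matrix

open Nat in
theorem ContinuousLinearMap.hasSum_exp_apply {𝕜 E : Type*} [RCLike 𝕜] [NormedAddCommGroup E]
    [NormedSpace 𝕜 E] [CompleteSpace E] (T : E →L[𝕜] E) (x : E) :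
    HasSum (fun k => (k !⁻¹ : 𝕜) • (T ^ k) x) (exp T x) := by
  simpa using (exp_series_hasSum_exp' (𝕂 := 𝕜) T).mapL (ContinuousLinearMap.apply 𝕜 E x)

open Nat in
theorem ContinuousLinearMap.exp_apply_eq_sum {𝕜 E ι : Type*} [RCLike 𝕜] [NormedAddCommGroup E]
    [NormedSpace 𝕜 E] [CompleteSpace E] [Fintype ι] [DecidableEq ι] (T : E →L[𝕜] E)
    (c : ι → E) (β : Matrix ι ι 𝕜) (h : ∀ μ, T (c μ) = ∑ ν, β μ ν • c ν) (μ : ι) :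
    exp T (c μ) = ∑ ν, exp β μ ν • c ν := by
  have hpow : ∀ (k : ℕ) (ρ : ι), (T ^ k) (c ρ) = ∑ ν, (β ^ k) ρ ν • c ν := by
    intro k
    induction k with
    | zero => intro ρ; simp [Matrix.one_apply, ite_smul]
    | succ k ih =>
      intro ρ
      rw [pow_succ' T, mul_apply_eq_comp, ih, pow_succ β]
      simp only [map_sum, map_smul, h, Finset.smul_sum, smul_smul, Matrix.mul_apply,
        Finset.sum_smul]
      exact Finset.sum_comm
  let _ : NormedRing (Matrix ι ι 𝕜) := Matrix.linftyOpNormedRing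
  let _ : NormedAlgebra 𝕜 (Matrix ι ι 𝕜) := Matrix.linftyOpNormedAlgebra
  -- Instance search only finds completeness for the product uniformity, not the normed one.
  have hexp := @exp_series_hasSum_exp' 𝕜 _ _ _ _ _ _ (FiniteDimensional.complete 𝕜 _) β
  have hentry : ∀ ν, HasSum (fun k => (k !⁻¹ : 𝕜) * (β ^ k) μ ν) (exp β μ ν) := fun ν =>
    Pi.hasSum.mp (Pi.hasSum.mp hexp μ) ν
  refine (T.hasSum_exp_apply (c μ)).unique ?_
  simp only [hpow, Finset.smul_sum, smul_smul]
  exact hasSum_sum fun ν _ => (hentry ν).smul_const (c ν)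

section NormedAlgebra

variable {𝕜 𝔸 𝔹 : Type*} [RCLike 𝕜] [NormedRing 𝔸] [NormedAlgebra 𝕜 𝔸] [CompleteSpace 𝔸]
  [NormedRing 𝔹] [NormedAlgebra 𝕜 𝔹] [CompleteSpace 𝔹]

open Nat in
theorem ContinuousLinearMap.map_exp_of_map_pow (f : 𝔸 →L[𝕜] 𝔹) (x : 𝔸)
    (hf : ∀ k : ℕ, f (x ^ k) = f x ^ k) : f (exp x) = exp (f x) := by
  have := (exp_series_hasSum_exp' (𝕂 := 𝕜) x).mapL f
  simp only [map_smul, hf] at this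
  exact this.unique (exp_series_hasSum_exp' (𝕂 := 𝕜) (f x))

theorem ContinuousLinearMap.exp_mul_eq_mul_exp (a : 𝔸) :
    exp (ContinuousLinearMap.mul 𝕜 𝔸 a) = ContinuousLinearMap.mul 𝕜 𝔸 (exp a) := by
  refine ((ContinuousLinearMap.mul 𝕜 𝔸).map_exp_of_map_pow a fun k => ?_).symm
  induction k with
  | zero => ext; simp
  | succ k ih => rw [pow_succ, pow_succ, ← ih]; ext; simp [mul_assoc]

theorem ContinuousLinearMap.exp_mul_flip_eq_mul_flip_exp (b : 𝔸) :
    exp ((ContinuousLinearMap.mul 𝕜 𝔸).flip b) = (ContinuousLinearMap.mul 𝕜 𝔸).flip (exp b) := by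
  refine ((ContinuousLinearMap.mul 𝕜 𝔸).flip.map_exp_of_map_pow b fun k => ?_).symm
  induction k with
  | zero => ext; simp
  | succ k ih => rw [pow_succ', pow_succ, ← ih]; ext; simp [mul_assoc]

theorem ContinuousLinearMap.exp_mul_add_mul_flip_apply (a b x : 𝔸) :
    exp (ContinuousLinearMap.mul 𝕜 𝔸 a + (ContinuousLinearMap.mul 𝕜 𝔸).flip b) x
      = exp a * x * exp b := by
  have hcomm : Commute (ContinuousLinearMap.mul 𝕜 𝔸 a) ((ContinuousLinearMap.mul 𝕜 𝔸).flip b) :=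
    ContinuousLinearMap.ext fun y => by simp [mul_assoc]
  have hball : ∀ T : 𝔸 →L[𝕜] 𝔸, T ∈ Metric.eball 0 (expSeries 𝕜 (𝔸 →L[𝕜] 𝔸)).radius :=
    fun T => (expSeries_radius_eq_top 𝕜 (𝔸 →L[𝕜] 𝔸)).symm ▸ edist_lt_top _ _
  rw [exp_add_of_commute_of_mem_ball hcomm (hball _) (hball _), exp_mul_eq_mul_exp,
    exp_mul_flip_eq_mul_flip_exp]
  simp [mul_assoc]

theorem exp_neg_mul_mul_exp_eq_sum {ι : Type*} [Fintype ι] [DecidableEq ι] (a : 𝔸) (c : ι → 𝔸)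
    (β : Matrix ι ι 𝕜) (h : ∀ ρ, c ρ * a - a * c ρ = ∑ ν, β ρ ν • c ν) (μ : ι) :
    exp (-a) * c μ * exp a = ∑ ν, exp β μ ν • c ν := by
  rw [← ContinuousLinearMap.exp_mul_add_mul_flip_apply (𝕜 := 𝕜)]
  refine ContinuousLinearMap.exp_apply_eq_sum _ c β (fun ρ => ?_) μ
  simpa [sub_eq_neg_add] using h ρ

end NormedAlgebra

section Clifford

variable {ι K A : Type*}

def majoranaQuadratic [Fintype ι] [SMul K A] [Mul A] [AddCommMonoid A]
    (α : Matrix ι ι K) (c : ι → A) : A :=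
  ∑ μ, ∑ ν, α μ ν • (c μ * c ν)

theorem clifford_commutator_mul [DecidableEq ι] [Ring A] (c : ι → A)
    (hc : ∀ μ ν, c μ * c ν + c ν * c μ = if μ = ν then 2 else 0) (ρ μ ν : ι) :
    c ρ * c μ * c ν - c μ * c ν * c ρ
      = (if ρ = μ then 2 * c ν else 0) - (if ρ = ν then 2 * c μ else 0) := by
  have hρμ : c ρ * c μ = (if ρ = μ then 2 else 0) - c μ * c ρ := eq_sub_of_add_eq (hc ρ μ)
  have hνρ : c ν * c ρ = (if ρ = ν then 2 else 0) - c ρ * c ν := eq_sub_of_add_eq' (hc ρ ν)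
  rw [mul_assoc (c μ), hρμ, hνρ]
  split_ifs <;> noncomm_ring

theorem clifford_commutator_majoranaQuadratic [Fintype ι] [DecidableEq ι] [CommRing K] [Ring A]
    [Algebra K A] (c : ι → A) (hc : ∀ μ ν, c μ * c ν + c ν * c μ = if μ = ν then 2 else 0)
    (α : Matrix ι ι K) (hα : αᵀ = -α) (ρ : ι) :
    c ρ * majoranaQuadratic α c - majoranaQuadratic α c * c ρ = ∑ ν, (4 * α ρ ν) • c ν := by
  have hαρ : ∀ ν, α ν ρ = -α ρ ν := fun ν => by simpa using congrFun (congrFun hα ρ) ν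
  calc _ = ∑ μ, ∑ ν, α μ ν •
        ((if ρ = μ then 2 * c ν else 0) - (if ρ = ν then 2 * c μ else 0)) := by
        simp only [majoranaQuadratic, Finset.mul_sum, Finset.sum_mul, ← Finset.sum_sub_distrib,
          mul_smul_comm, smul_mul_assoc, ← smul_sub, ← mul_assoc, clifford_commutator_mul c hc]
    _ = ∑ ν, α ρ ν • (2 * c ν) - ∑ μ, α μ ρ • (2 * c μ) := by
        simp only [smul_sub, smul_ite, smul_zero, Finset.sum_sub_distrib, Finset.sum_ite_eq,
          Finset.mem_univ, if_true]
        rw [Finset.sum_comm]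
        simp only [Finset.sum_ite_eq, Finset.mem_univ, if_true]
    _ = _ := by
        rw [← Finset.sum_sub_distrib]
        refine Finset.sum_congr rfl fun ν _ => ?_
        rw [hαρ, two_mul]
        module

theorem star_majoranaQuadratic [Fintype ι] [CommRing K] [StarRing K] [Ring A] [StarRing A]
    [Algebra K A] [StarModule K A] (c : ι → A) (hc : ∀ μ, IsSelfAdjoint (c μ))
    (α : Matrix ι ι K) (hα : αᴴ = -α) :
    star (majoranaQuadratic α c) = -majoranaQuadratic α c := by
  have hαstar : ∀ μ ν, star (α μ ν) = -α ν μ := fun μ ν => by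
    simpa using congrFun (congrFun hα ν) μ
  simp only [majoranaQuadratic, star_sum, star_smul, star_mul, (hc _).star_eq, hαstar, neg_smul,
    Finset.sum_neg_distrib]
  rw [Finset.sum_comm]

end Clifford

theorem exp_mem_specialOrthogonalGroup {m : Type*} [Fintype m] [DecidableEq m]
    {α : Matrix m m ℝ} (hα : αᵀ = -α) : exp α ∈ specialOrthogonalGroup m ℝ := by
  have horth : exp α * (exp α)ᵀ = 1 := by
    rw [← exp_transpose, hα, ← Matrix.exp_add_of_commute _ _ ((Commute.refl α).neg_right),
      add_neg_cancel, exp_zero]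
  refine ⟨(mem_orthogonalGroup_iff m ℝ).mpr horth, ?_⟩
  have hsq : (exp α).det = (exp ((2 : ℝ)⁻¹ • α)).det ^ 2 := by
    rw [sq, ← det_mul, ← Matrix.exp_add_of_commute _ _ (Commute.refl _), ← add_smul]
    norm_num
  have hdet_sq : (exp α).det ^ 2 = 1 := by
    simpa [sq] using congrArg det horth
  show (exp α).det = 1
  exact (pow_eq_one_iff_of_nonneg (hsq ▸ sq_nonneg _) two_ne_zero).mp hdet_sq

/-- Let `c₁,…,c_{2n}` be Hermitian operators on a finite-dimensional Hilbert space
satisfying the Clifford relations, let `α` be a real antisymmetric `2n × 2n` matrix, and let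
`H = -i Σ_{μν} α_{μν} c_μ c_ν` and `U = e^{iH}`.  Then `U† c_μ U = Σ_ν R_{μν} c_ν` where
`R = e^{4α}` is a matrix in `SO(2n)`. -/
theorem gaussian_conj_majorana (n d : ℕ)
    (c : Fin (2 * n) → Matrix (Fin d) (Fin d) ℂ)
    (hherm : ∀ μ, (c μ).IsHermitian)
    (hc : ∀ μ ν, c μ * c ν + c ν * c μ =
      if μ = ν then (2 : ℂ) • (1 : Matrix (Fin d) (Fin d) ℂ) else 0)
    (α : Matrix (Fin (2 * n)) (Fin (2 * n)) ℝ) (hα : αᵀ = -α)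
    (H : Matrix (Fin d) (Fin d) ℂ)
    (hH : H = (-Complex.I) • ∑ μ, ∑ ν, (α μ ν : ℂ) • (c μ * c ν))
    (U : Matrix (Fin d) (Fin d) ℂ) (hU : U = exp (Complex.I • H))
    (R : Matrix (Fin (2 * n)) (Fin (2 * n)) ℝ) (hR : R = exp ((4 : ℝ) • α)) :
    (R * Rᵀ = 1 ∧ R.det = 1) ∧ ∀ μ, Uᴴ * c μ * U = ∑ ν, (R μ ν : ℂ) • c ν := by
  subst hR
  have hSO := exp_mem_specialOrthogonalGroup (α := (4 : ℝ) • α)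
    (by rw [transpose_smul, hα, smul_neg])
  refine ⟨⟨(mem_orthogonalGroup_iff _ ℝ).mp hSO.1, hSO.2⟩, fun μ => ?_⟩
  have hclifford : ∀ μ ν, c μ * c ν + c ν * c μ = if μ = ν then 2 else 0 := fun μ ν => by
    rw [hc, two_smul, one_add_one_eq_two]
  have hUA : U = exp (majoranaQuadratic α c) := by
    simp only [hU, hH, majoranaQuadratic, smul_smul, mul_neg, Complex.I_mul_I, neg_neg, one_smul,
      Complex.coe_smul]
  have hUstar : Uᴴ = exp (-majoranaQuadratic α c) := by
    rw [hUA, ← exp_conjTranspose, ← star_eq_conjTranspose,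
      star_majoranaQuadratic c (fun μ => (hherm μ).isSelfAdjoint) α
        (by rw [conjTranspose_eq_transpose_of_trivial, hα])]
  let _ : NormedRing (Matrix (Fin d) (Fin d) ℂ) := Matrix.linftyOpNormedRing
  let _ : NormedAlgebra ℝ (Matrix (Fin d) (Fin d) ℂ) := Matrix.linftyOpNormedAlgebra
  have hconj := exp_neg_mul_mul_exp_eq_sum _ c ((4 : ℝ) • α) (fun ρ => by
    simpa using clifford_commutator_majoranaQuadratic c hclifford α hα ρ) μ
  rw [hUstar, hUA]
  simp only [Complex.coe_smul]
  exact hconj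
end

section
/- Let U be a unitary such that U† c_μ U = Σ_ν R_{μν} c_ν with R ∈ SO(2n), where the c_μ satisfy Clifford relations. Then for indices α_1 < ⋯ < α_k, U† (c_{α_1} ⋯ c_{α_k}) U = Σ_{β_1 < ⋯ < β_k} det(R[{α_1,...,α_k}, {β_1,...,β_k}]) · c_{β_1} ⋯ c_{β_k}, where R[S,T] is the k×k submatrix of R with rows S and columns T. -/
/-!
Conjugation by `U` is multiplicative, so the left side is the product of the rotated generators
`c'ᵢ = ∑ ν, R (αᵢ) ν • c ν`. Orthogonality of the rows of `R` makes the `c'ᵢ` pairwise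
anticommute, so `k!` times their product is the antisymmetrization
`∑ σ, sign σ • c'_{σ 1} ⋯ c'_{σ k}`. Expanding it multilinearly, the coefficient of
`c_{f 1} ⋯ c_{f k}` is the minor `det R[α, f]`. It vanishes unless `f` is injective, and the
injective `f` sharing an increasing rearrangement `β` contribute `k!` copies of
`det R[α, β] • c_β`, because minor and monomial change by the same sign.
-/

open Matrix

section Anticommuting

variable {A : Type*} [Ring A]

theorem prod_ofFn_comp_swap_castSucc_succ_of_anticomm {n : ℕ} {x : Fin (n + 1) → A}
    (hx : Pairwise fun i j => x i * x j = -(x j * x i)) (i : Fin n) :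
    (List.ofFn (x ∘ Equiv.swap i.castSucc i.succ)).prod = -(List.ofFn x).prod := by
  induction n with
  | zero => exact i.elim0
  | succ n ih =>
    cases i using Fin.cases with
    | zero =>
      have hfix : ∀ j : Fin n, Equiv.swap (0 : Fin (n + 2)) 1 j.succ.succ = j.succ.succ :=
        fun j => Equiv.swap_apply_of_ne_of_ne (Fin.succ_ne_zero _) (by simp [Fin.ext_iff])
      simp only [List.ofFn_succ, List.prod_cons, Function.comp_apply, Fin.castSucc_zero,
        Fin.succ_zero_eq_one, Equiv.swap_apply_left, Equiv.swap_apply_right]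
      simp only [hfix]
      rw [← mul_assoc, hx (by simp), neg_mul, mul_assoc]
    | succ i =>
      have hshift : (fun j => (x ∘ Equiv.swap i.succ.castSucc i.succ.succ) j.succ)
          = (x ∘ Fin.succ) ∘ Equiv.swap i.castSucc i.succ := by
        ext j
        simp [(Fin.succ_injective _).swap_apply]
      have hzero : Equiv.swap i.succ.castSucc i.succ.succ 0 = 0 :=
        Equiv.swap_apply_of_ne_of_ne (by simp [Fin.ext_iff]) (Fin.succ_ne_zero _).symm
      rw [List.ofFn_succ, List.prod_cons, List.ofFn_succ (f := x), List.prod_cons, hshift,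
        ih (x := x ∘ Fin.succ) (fun a b hab => hx (Fin.succ_injective _ |>.ne hab)) i,
        Function.comp_apply, hzero, mul_neg]
      rfl

theorem prod_ofFn_comp_perm_of_anticomm {k : ℕ} {x : Fin k → A}
    (hx : Pairwise fun i j => x i * x j = -(x j * x i)) (σ : Equiv.Perm (Fin k)) :
    (List.ofFn (x ∘ σ)).prod = Equiv.Perm.sign σ • (List.ofFn x).prod := by
  cases k with
  | zero => simp [Subsingleton.elim σ 1]
  | succ n =>
    have hσ : σ ∈ Submonoid.closure (Set.range fun i : Fin n => Equiv.swap i.castSucc i.succ) :=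
      Equiv.Perm.mclosure_swap_castSucc_succ n ▸ Submonoid.mem_top σ
    induction hσ using Submonoid.closure_induction generalizing x with
    | mem _ h =>
      obtain ⟨i, rfl⟩ := h
      rw [prod_ofFn_comp_swap_castSucc_succ_of_anticomm hx, Equiv.Perm.sign_swap
        Fin.castSucc_lt_succ.ne, Units.neg_smul, one_smul]
    | one => simp
    | mul σ τ _ _ ihσ ihτ =>
      rw [Equiv.Perm.coe_mul, ← Function.comp_assoc,
        ihτ (x := x ∘ σ) fun a b hab => hx (σ.injective.ne hab), ihσ hx, smul_smul,
        Equiv.Perm.sign_mul, mul_comm]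

end Anticommuting

open Finset in
theorem sum_eq_factorial_smul_sum_strictMono {α M : Type*} [LinearOrder α] [Fintype α]
    [AddCommMonoid M] {k : ℕ} (F : (Fin k → α) → M)
    (hzero : ∀ f, ¬ Function.Injective f → F f = 0)
    (hperm : ∀ f, Function.Injective f → ∀ σ : Equiv.Perm (Fin k), F (f ∘ σ) = F f) :
    ∑ f, F f
      = k.factorial • ∑ β ∈ univ.filter (fun β : Fin k → α => ∀ i j, i < j → β i < β j), F β := by
  classical
  have hinj : ∑ f, F f = ∑ f ∈ univ.filter Function.Injective, F f :=
    (sum_filter_of_ne fun f _ hf => by_contra fun h => hf (hzero f h)).symm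
  have hbij : ∑ f ∈ univ.filter Function.Injective, F f
      = ∑ p ∈ (univ : Finset (Equiv.Perm (Fin k))) ×ˢ
          univ.filter (fun β : Fin k → α => ∀ i j, i < j → β i < β j), F (p.2 ∘ p.1) := by
    refine sum_nbij' (fun f => ((Tuple.sort f)⁻¹, f ∘ Tuple.sort f)) (fun p => p.2 ∘ p.1)
      ?_ ?_ ?_ ?_ ?_
    · intro f hf
      simp only [mem_filter, mem_univ, true_and, mem_product] at hf ⊢
      exact (Tuple.monotone_sort f).strictMono_of_injective (hf.comp (Tuple.sort f).injective)
    · intro p hp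
      simp only [mem_filter, mem_univ, true_and, mem_product] at hp ⊢
      exact (StrictMono.injective hp).comp p.1.injective
    · intro f _
      simp [Function.comp_assoc]
    · intro p hp
      simp only [mem_filter, mem_univ, true_and, mem_product] at hp
      have hsort : Tuple.sort (p.2 ∘ p.1) = p.1⁻¹ := by
        refine (Tuple.eq_sort_iff.mpr ⟨?_, fun i j hij heq => ?_⟩).symm
        · simpa [Function.comp_assoc] using (StrictMono.monotone hp)
        · simp only [Function.comp_apply, Equiv.Perm.coe_inv, Equiv.apply_symm_apply] at heq
          exact absurd (StrictMono.injective hp heq) hij.ne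
      ext : 1 <;> simp [hsort, Function.comp_assoc]
    · intro f _
      simp [Function.comp_assoc]
  rw [hinj, hbij, sum_product, sum_comm, smul_sum]
  refine sum_congr rfl fun β hβ => ?_
  simp only [mem_filter, mem_univ, true_and] at hβ
  rw [sum_congr rfl fun σ _ => hperm β (StrictMono.injective hβ) σ, sum_const, card_univ,
    Fintype.card_perm, Fintype.card_fin]

theorem prod_ofFn_sum_smul {K A ι : Type*} [CommSemiring K] [Semiring A] [Algebra K A]
    [Fintype ι] {k : ℕ} (M : Matrix (Fin k) ι K) (c : ι → A) :
    (List.ofFn fun i => ∑ ν, M i ν • c ν).prod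
      = ∑ f : Fin k → ι, (∏ i, M i (f i)) • (List.ofFn fun i => c (f i)).prod := by
  classical
  simpa [MultilinearMap.map_smul_univ] using
    (MultilinearMap.mkPiAlgebraFin K k A).map_sum fun i ν => M i ν • c ν

theorem factorial_smul_prod_ofFn_of_anticomm {A : Type*} [Ring A] {k : ℕ} {x : Fin k → A}
    (hx : Pairwise fun i j => x i * x j = -(x j * x i)) :
    k.factorial • (List.ofFn x).prod
      = ∑ σ : Equiv.Perm (Fin k), Equiv.Perm.sign σ • (List.ofFn (x ∘ σ)).prod := by
  simp [prod_ofFn_comp_perm_of_anticomm hx, smul_smul, Int.units_mul_self, Fintype.card_perm]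

theorem prod_ofFn_sum_smul_eq_sum_det_smul {K A ι : Type*} [Field K] [CharZero K] [Ring A]
    [Algebra K A] [Fintype ι] [LinearOrder ι] {k : ℕ} {c : ι → A}
    (hc : Pairwise fun μ ν => c μ * c ν = -(c ν * c μ)) (M : Matrix (Fin k) ι K)
    (hM : Pairwise fun i j => (∑ ν, M i ν • c ν) * (∑ ν, M j ν • c ν)
      = -((∑ ν, M j ν • c ν) * (∑ ν, M i ν • c ν))) :
    (List.ofFn fun i => ∑ ν, M i ν • c ν).prod
      = ∑ β ∈ Finset.univ.filter (fun β : Fin k → ι => ∀ i j, i < j → β i < β j),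
          (M.submatrix id β).det • (List.ofFn fun i => c (β i)).prod := by
  set F : (Fin k → ι) → A :=
    fun f => (M.submatrix id f).det • (List.ofFn fun i => c (f i)).prod
  have hzero : ∀ f, ¬ Function.Injective f → F f = 0 := by
    intro f hf
    obtain ⟨i, j, hij, hne⟩ : ∃ i j, f i = f j ∧ i ≠ j := by
      simpa [Function.Injective] using hf
    have hdet : (M.submatrix id f).det = 0 := det_zero_of_column_eq hne fun a => by simp [hij]
    simp [F, hdet]
  have hperm : ∀ f, Function.Injective f → ∀ σ : Equiv.Perm (Fin k), F (f ∘ σ) = F f := by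
    intro f hf σ
    have hcf : Pairwise fun i j => c (f i) * c (f j) = -(c (f j) * c (f i)) :=
      fun i j hij => hc (hf.ne hij)
    change ((M.submatrix id f).submatrix id σ).det • (List.ofFn ((fun i => c (f i)) ∘ σ)).prod
      = F f
    rw [det_permute', prod_ofFn_comp_perm_of_anticomm hcf, smul_comm, Units.smul_def,
      ← Int.cast_smul_eq_zsmul K, smul_smul, ← mul_assoc, ← Int.cast_mul, ← Units.val_mul,
      Int.units_mul_self, Units.val_one, Int.cast_one, one_mul]
  have hexpand : k.factorial • (List.ofFn fun i => ∑ ν, M i ν • c ν).prod = ∑ f, F f := by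
    rw [factorial_smul_prod_ofFn_of_anticomm hM]
    calc ∑ σ : Equiv.Perm (Fin k), Equiv.Perm.sign σ •
          (List.ofFn ((fun i => ∑ ν, M i ν • c ν) ∘ σ)).prod
        = ∑ σ : Equiv.Perm (Fin k), ∑ f : Fin k → ι,
            (Equiv.Perm.sign σ • ∏ i, M (σ i) (f i)) • (List.ofFn fun i => c (f i)).prod := by
          refine Finset.sum_congr rfl fun σ _ => ?_
          have := prod_ofFn_sum_smul (M.submatrix σ id) c
          simp only [submatrix_apply, id] at this
          rw [Function.comp_def, this, Finset.smul_sum]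
          simp [smul_assoc]
      _ = ∑ f, F f := by
          rw [Finset.sum_comm]
          refine Finset.sum_congr rfl fun f _ => ?_
          rw [← Finset.sum_smul]
          simp only [F, det_apply, submatrix_apply, id]
  rw [sum_eq_factorial_smul_sum_strictMono F hzero hperm, ← Nat.cast_smul_eq_nsmul K,
    ← Nat.cast_smul_eq_nsmul K] at hexpand
  exact smul_right_injective A (Nat.cast_ne_zero.mpr k.factorial_ne_zero) hexpand

def IsCliffordFamily {ι A : Type*} [DecidableEq ι] [Ring A] (c : ι → A) : Prop :=
  ∀ μ ν, c μ * c ν + c ν * c μ = if μ = ν then 2 else 0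

namespace IsCliffordFamily

variable {ι A : Type*} [DecidableEq ι] [Ring A] {c : ι → A}

theorem anticomm (hc : IsCliffordFamily c) : Pairwise fun μ ν => c μ * c ν = -(c ν * c μ) :=
  fun μ ν h => eq_neg_of_add_eq_zero_left <| (hc μ ν).trans (if_neg h)

theorem sum_smul_anticomm {K : Type*} [CommRing K] [Algebra K A] [Fintype ι]
    (hc : IsCliffordFamily c) {v w : ι → K} (hvw : v ⬝ᵥ w = 0) :
    (∑ μ, v μ • c μ) * (∑ ν, w ν • c ν) = -((∑ ν, w ν • c ν) * (∑ μ, v μ • c μ)) := by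
  refine eq_neg_of_add_eq_zero_left ?_
  calc (∑ μ, v μ • c μ) * (∑ ν, w ν • c ν) + (∑ ν, w ν • c ν) * (∑ μ, v μ • c μ)
      = ∑ μ, ∑ ν, (v μ * w ν) • (c μ * c ν + c ν * c μ) := by
        simp only [Finset.sum_mul, Finset.mul_sum, smul_mul_smul_comm, smul_add,
          Finset.sum_add_distrib]
        congr 1
        · exact Finset.sum_comm
        · simp only [mul_comm (w _)]
    _ = ∑ μ, (v μ * w μ) • (2 : A) := by
        simp [hc _ _]
    _ = 0 := by
        rw [← Finset.sum_smul]
        exact (congrArg (· • (2 : A)) hvw).trans (zero_smul K _)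

end IsCliffordFamily

theorem conj_prod_ofFn {M : Type*} [Monoid M] {u v : M} (huv : u * v = 1) (hvu : v * u = 1)
    {k : ℕ} (x : Fin k → M) :
    u * (List.ofFn x).prod * v = (List.ofFn fun i => u * x i * v).prod := by
  induction k with
  | zero => simpa using huv
  | succ k ih =>
    simp only [List.ofFn_succ, List.prod_cons, ← ih]
    simp only [mul_assoc, ← mul_assoc v, hvu, one_mul]

theorem gaussian_conj_monomial_general {A : Type*} [Ring A] [Algebra ℝ A] [StarRing A]
    (n k : ℕ) (c : Fin (2 * n) → A)
    (hc : ∀ μ ν, c μ * c ν + c ν * c μ = if μ = ν then (2 : A) else 0)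
    (U : A) (hU₁ : star U * U = 1) (hU₂ : U * star U = 1)
    (R : Matrix (Fin (2 * n)) (Fin (2 * n)) ℝ) (hR : R * Rᵀ = 1)
    (hconj : ∀ μ, star U * c μ * U = ∑ ν, R μ ν • c ν)
    (S : Finset (Fin (2 * n))) (hS : S.card = k) :
    star U * (List.ofFn fun i : Fin k => c (S.orderIsoOfFin hS i)).prod * U =
      ∑ β ∈ Finset.univ.filter
          (fun β : Fin k → Fin (2 * n) => ∀ i j : Fin k, i < j → β i < β j),
        (Matrix.of fun i j : Fin k => R (S.orderIsoOfFin hS i) (β j)).det •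
          (List.ofFn fun i : Fin k => c (β i)).prod := by
  have hcliff : IsCliffordFamily c := hc
  set α : Fin k → Fin (2 * n) := fun i => S.orderIsoOfFin hS i
  have hα : Function.Injective α := Subtype.val_injective.comp (S.orderIsoOfFin hS).injective
  have hrows : Pairwise fun i j => R (α i) ⬝ᵥ R (α j) = 0 := fun i j hij => by
    rw [← one_apply_ne (hα.ne hij), ← hR]
    rfl
  rw [conj_prod_ofFn hU₁ hU₂]
  simp only [hconj]
  exact prod_ofFn_sum_smul_eq_sum_det_smul hcliff.anticomm (R.submatrix α id)
    fun i j hij => hcliff.sum_smul_anticomm (hrows hij)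

/-- Let `c₁,…,c_{2n}` satisfy the Clifford relations and let `U` be a unitary with
`U† c_μ U = Σ_ν R_{μν} c_ν` for `R ∈ SO(2n)`.  Then for indices `α₁ < ⋯ < α_k` (given as
the `k`-element set `S`),
`U† (c_{α₁} ⋯ c_{α_k}) U = Σ_{β₁ < ⋯ < β_k} det(R[{α},{β}]) · c_{β₁} ⋯ c_{β_k}`,
where `R[S,T]` is the `k × k` submatrix of `R` with rows `S` and columns `T`. -/
theorem gaussian_conj_monomial {A : Type*} [Ring A] [Algebra ℝ A] [StarRing A]
    (n k : ℕ) (c : Fin (2 * n) → A)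
    (hc : ∀ μ ν, c μ * c ν + c ν * c μ = if μ = ν then (2 : A) else 0)
    (U : A) (hU₁ : star U * U = 1) (hU₂ : U * star U = 1)
    (R : Matrix (Fin (2 * n)) (Fin (2 * n)) ℝ) (hR : R * Rᵀ = 1) (hdet : R.det = 1)
    (hconj : ∀ μ, star U * c μ * U = ∑ ν, R μ ν • c ν)
    (S : Finset (Fin (2 * n))) (hS : S.card = k) :
    star U * (List.ofFn fun i : Fin k => c (S.orderIsoOfFin hS i)).prod * U =
      ∑ β ∈ Finset.univ.filter
          (fun β : Fin k → Fin (2 * n) => ∀ i j : Fin k, i < j → β i < β j),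
        (Matrix.of fun i j : Fin k => R (S.orderIsoOfFin hS i) (β j)).det •
          (List.ofFn fun i : Fin k => c (β i)).prod :=
  gaussian_conj_monomial_general n k c hc U hU₁ hU₂ R hR hconj S hS
end

section
/- For every real r with 0 ≤ r < 1 and natural numbers p, k, m with k = 2m+2 ≤ p/2 and r = (k/(p-k+1))², the partial sum of binomial coefficients satisfies Σ_{s=1}^{m} C(p, 2m+4-2s) < C(p, 2m+2) · 1/(1-r). -/
set_option maxHeartbeats 800000


/-- For `0 ≤ r < 1`, `k = 2m+2 ≤ p/2` and `r = (k/(p-k+1))²`, the partial sum of even-step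
binomial coefficients satisfies `Σ_{s=1}^{m} C(p, 2m+4-2s) < C(p, 2m+2) · 1/(1-r)`. -/
theorem partial_binomial_sum_bound (p k m : ℕ) (r : ℝ)
    (hk : k = 2 * m + 2) (hkp : k ≤ p / 2)
    (hr : r = ((k : ℝ) / ((p : ℝ) - (k : ℝ) + 1)) ^ 2)
    (hr0 : 0 ≤ r) (hr1 : r < 1) :
    (∑ s ∈ Finset.Icc 1 m, (p.choose (2 * m + 4 - 2 * s) : ℝ)) <
      (p.choose (2 * m + 2) : ℝ) * (1 / (1 - r)) := by
  subst hk
  have hp : (2 * m + 2) * 2 ≤ p := (Nat.le_div_iff_mul_le (by norm_num)).1 hkp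
  have hpR : (4 * m + 4 : ℝ) ≤ (p : ℝ) := by exact_mod_cast (by omega : 4 * m + 4 ≤ p)
  have hD : (0 : ℝ) < (p : ℝ) - (2 * m + 2 : ℕ) + 1 := by push_cast; linarith
  have hrpos : 0 < r := by
    rw [hr]
    have hk2 : (0:ℝ) < ((2*m+2 : ℕ) : ℝ) := by positivity
    positivity
  have h1r : (0:ℝ) < 1 - r := by linarith
  -- key decay estimate
  have key : ∀ t, t ≤ m → (p.choose (2*m+2 - 2*t) : ℝ) ≤ (p.choose (2*m+2) : ℝ) * r ^ t := by
    intro t ht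
    induction t with
    | zero => simp
    | succ t ih =>
      have ht' : t ≤ m := Nat.le_of_succ_le ht
      have ih' := ih ht'
      obtain ⟨j, hj⟩ : ∃ j, j = 2*m - 2*t := ⟨_, rfl⟩
      have hj1 : 2*m+2 - 2*(t+1) = j := by omega
      have hj2 : 2*m+2 - 2*t = j + 2 := by omega
      have hjp : j + 2 ≤ p := by omega
      have h1 := Nat.choose_succ_right_eq p j
      have h2 := Nat.choose_succ_right_eq p (j+1)
      have hc1 : ((p.choose (j+1) : ℝ)) * ((j:ℝ)+1) = (p.choose j : ℝ) * ((p:ℝ) - j) := by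
        have hle : j ≤ p := by omega
        have := congrArg (Nat.cast : ℕ → ℝ) h1
        push_cast [Nat.cast_sub hle] at this
        linarith [this]
      have hc2 : ((p.choose (j+2) : ℝ)) * ((j:ℝ)+2) = (p.choose (j+1) : ℝ) * ((p:ℝ) - j - 1) := by
        have hle : j + 1 ≤ p := by omega
        have := congrArg (Nat.cast : ℕ → ℝ) h2
        push_cast [Nat.cast_sub hle] at this
        push_cast at this
        linarith [this]
      have hA : (p.choose j : ℝ) * (((p:ℝ) - j) * ((p:ℝ) - j - 1)) =
          (p.choose (j+2) : ℝ) * (((j:ℝ)+2) * ((j:ℝ)+1)) := by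
        have hpj1 : (0:ℝ) < (p:ℝ) - j - 1 := by
          have : (j : ℝ) ≤ 2*m := by exact_mod_cast (by omega : j ≤ 2*m)
          linarith
        nlinarith [hc1, hc2]
      -- step inequality
      have hstep : (p.choose j : ℝ) ≤ (p.choose (j+2) : ℝ) * r := by
        have hjR : (j : ℝ) ≤ 2*m := by exact_mod_cast (by omega : j ≤ 2*m)
        have hjR0 : (0:ℝ) ≤ (j:ℝ) := Nat.cast_nonneg j
        have hDdef : ((2*m+2 : ℕ) : ℝ) = 2*(m:ℝ)+2 := by push_cast; ring
        have hrval : r = ((2*(m:ℝ)+2) / ((p:ℝ) - (2*(m:ℝ)+2) + 1)) ^ 2 := by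
          rw [hr, hDdef]
        have hDpos : (0:ℝ) < (p:ℝ) - (2*(m:ℝ)+2) + 1 := by linarith
        have hcjpos : (0:ℝ) ≤ (p.choose j : ℝ) := Nat.cast_nonneg _
        have hcj2pos : (0:ℝ) < (p.choose (j+2) : ℝ) := by
          exact_mod_cast Nat.choose_pos hjp
        rw [hrval, div_pow, ← mul_div_assoc, le_div_iff₀ (by positivity)]
        -- goal: choose j * D^2 ≤ choose (j+2) * K^2
        have hD1 : ((p:ℝ) - (2*(m:ℝ)+2) + 1) ≤ (p:ℝ) - j - 1 := by linarith
        have hD2 : ((p:ℝ) - (2*(m:ℝ)+2) + 1) ≤ (p:ℝ) - j := by linarith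
        have hK1 : (j:ℝ) + 2 ≤ 2*(m:ℝ)+2 := by linarith
        have hK2 : (j:ℝ) + 1 ≤ 2*(m:ℝ)+2 := by linarith
        calc (p.choose j : ℝ) * ((p:ℝ) - (2*(m:ℝ)+2) + 1) ^ 2
            ≤ (p.choose j : ℝ) * (((p:ℝ) - j) * ((p:ℝ) - j - 1)) := by
              apply mul_le_mul_of_nonneg_left _ hcjpos
              nlinarith [hDpos, mul_le_mul hD2 hD1 hDpos.le (by linarith : (0:ℝ) ≤ (p:ℝ) - j)]
          _ = (p.choose (j+2) : ℝ) * (((j:ℝ)+2) * ((j:ℝ)+1)) := hA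
          _ ≤ (p.choose (j+2) : ℝ) * (2*(m:ℝ)+2) ^ 2 := by
              apply mul_le_mul_of_nonneg_left _ hcj2pos.le
              nlinarith [mul_le_mul hK1 hK2 (by linarith) (by linarith : (0:ℝ) ≤ 2*(m:ℝ)+2)]
      calc (p.choose (2*m+2 - 2*(t+1)) : ℝ) = (p.choose j : ℝ) := by rw [hj1]
        _ ≤ (p.choose (j+2) : ℝ) * r := hstep
        _ = (p.choose (2*m+2 - 2*t) : ℝ) * r := by rw [hj2]
        _ ≤ ((p.choose (2*m+2) : ℝ) * r ^ t) * r :=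
            mul_le_mul_of_nonneg_right ih' hrpos.le
        _ = (p.choose (2*m+2) : ℝ) * r ^ (t+1) := by ring
  -- bound the sum
  have hsum : (∑ s ∈ Finset.Icc 1 m, (p.choose (2 * m + 4 - 2 * s) : ℝ)) ≤
      (p.choose (2*m+2) : ℝ) * ∑ i ∈ Finset.range m, r ^ i := by
    rw [← Finset.Ico_add_one_right_eq_Icc, Finset.sum_Ico_eq_sum_range, Finset.mul_sum]
    try simp only [Nat.add_sub_cancel]
    apply Finset.sum_le_sum
    intro i hi
    have hi' : i ≤ m := le_of_lt (Finset.mem_range.mp hi)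
    have : 2 * m + 4 - 2 * (1 + i) = 2*m+2 - 2*i := by omega
    rw [this]
    exact key i hi'
  have hgeom : (∑ i ∈ Finset.range m, r ^ i) < 1 / (1 - r) := by
    rw [lt_div_iff₀ h1r]
    have hg := geom_sum_mul r m
    have hrm : 0 < r ^ m := pow_pos hrpos m
    nlinarith [hg]
  have hCpos : (0:ℝ) < (p.choose (2*m+2) : ℝ) := by
    exact_mod_cast Nat.choose_pos (by omega : 2*m+2 ≤ p)
  calc (∑ s ∈ Finset.Icc 1 m, (p.choose (2 * m + 4 - 2 * s) : ℝ))
      ≤ (p.choose (2*m+2) : ℝ) * ∑ i ∈ Finset.range m, r ^ i := hsum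
    _ < (p.choose (2*m+2) : ℝ) * (1 / (1 - r)) :=
        mul_lt_mul_of_pos_left hgeom hCpos
end

section
/- For n, m natural numbers with m ≤ ⌊n/2⌋ - 1 and r = ((2m+2)/(2n-2m-1))² (so 0 ≤ r < 1), the weighted partial sum satisfies Σ_{s=1}^{m} s · C(2n, 2m+4-2s) < C(2n, 2m+2) · 1/(1-r)². -/
/-!
For `j ≤ 2m` the ratio `C(2n, j) / C(2n, j + 2) = (j + 2)(j + 1) / ((2n - j - 1)(2n - j))` is at
most `r`, since each of its two factors is at most `(2m + 2) / (2n - 2m - 1)`. Hence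
`C(2n, 2m + 2 - 2k) ≤ r^k C(2n, 2m + 2)`, and the weighted sum is bounded by
`C(2n, 2m + 2) ∑_{k < m} (k + 1) r^k`, a strict partial sum of `∑ (k + 1) r^k = 1 / (1 - r)^2`.
-/

open Finset

lemma Nat.choose_add_two_mul (N a : ℕ) :
    N.choose (a + 2) * ((a + 2) * (a + 1)) = N.choose a * ((N - a) * (N - a - 1)) := by
  have h₁ := Nat.choose_succ_right_eq N a
  have h₂ := Nat.choose_succ_right_eq N (a + 1)
  calc N.choose (a + 2) * ((a + 2) * (a + 1)) = N.choose (a + 1) * (a + 1) * (N - (a + 1)) := by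
        rw [← mul_assoc, h₂]; ring
    _ = N.choose a * ((N - a) * (N - a - 1)) := by rw [h₁, Nat.sub_add_eq]; ring

lemma choose_le_sq_mul_choose_add_two {N a c : ℕ} (hac : a + 2 ≤ c) (hcN : c ≤ N) :
    (N.choose a : ℝ) ≤ (c / (N - c + 1) : ℝ) ^ 2 * N.choose (a + 2) := by
  set ρ : ℝ := c / (N - c + 1)
  have ha : (a : ℝ) + 2 ≤ c := by exact_mod_cast hac
  have hc : (c : ℝ) ≤ N := by exact_mod_cast hcN
  have hd : (0 : ℝ) < N - c + 1 := by linarith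
  have h₁ : (a : ℝ) + 2 ≤ ρ * (N - a - 1) := by
    rw [div_mul_eq_mul_div, le_div_iff₀ hd]; nlinarith
  have h₂ : (a : ℝ) + 1 ≤ ρ * (N - a) := by
    rw [div_mul_eq_mul_div, le_div_iff₀ hd]; nlinarith
  have hpos : (0 : ℝ) < (N - a) * (N - a - 1) := by nlinarith
  have hcast : (((N - a) * (N - a - 1) : ℕ) : ℝ) = (N - a) * (N - a - 1) := by
    rw [Nat.cast_mul, Nat.cast_sub (by omega), Nat.cast_sub (by omega), Nat.cast_sub (by omega)]
    push_cast; ring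
  have hid : (N.choose (a + 2) : ℝ) * ((a + 2) * (a + 1)) = N.choose a * ((N - a) * (N - a - 1)) := by
    rw [← hcast]; exact_mod_cast Nat.choose_add_two_mul N a
  refine le_of_mul_le_mul_right ?_ hpos
  calc (N.choose a : ℝ) * ((N - a) * (N - a - 1)) = N.choose (a + 2) * ((a + 2) * (a + 1)) := hid.symm
    _ ≤ N.choose (a + 2) * ((ρ * (N - a - 1)) * (ρ * (N - a))) := by
        gcongr; linarith
    _ = ρ ^ 2 * N.choose (a + 2) * ((N - a) * (N - a - 1)) := by ring

lemma choose_sub_two_mul_le {N c k : ℕ} (hk : 2 * k ≤ c) (hcN : c ≤ N) :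
    (N.choose (c - 2 * k) : ℝ) ≤ ((c / (N - c + 1) : ℝ) ^ 2) ^ k * N.choose c := by
  simpa using le_geom (u := fun i ↦ (N.choose (c - 2 * i) : ℝ)) (sq_nonneg _) k fun i hi ↦ by
    simpa [show c - 2 * (i + 1) + 2 = c - 2 * i by omega] using
      choose_le_sq_mul_choose_add_two (a := c - 2 * (i + 1)) (by omega) hcN

lemma sum_range_add_one_mul_pow_lt {r : ℝ} (hr₀ : 0 < r) (hr₁ : r < 1) (m : ℕ) :
    ∑ k ∈ range m, ((k : ℝ) + 1) * r ^ k < 1 / (1 - r) ^ 2 := by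
  have hsum : HasSum (fun k : ℕ ↦ ((k : ℝ) + 1) * r ^ k) (1 / (1 - r) ^ 2) := by
    simpa using hasSum_choose_mul_geometric_of_norm_lt_one 1
      (by rwa [Real.norm_of_nonneg hr₀.le] : ‖r‖ < 1)
  calc ∑ k ∈ range m, ((k : ℝ) + 1) * r ^ k < ∑ k ∈ range (m + 1), ((k : ℝ) + 1) * r ^ k := by
        rw [sum_range_succ]; linarith [show 0 < ((m : ℝ) + 1) * r ^ m by positivity]
    _ ≤ 1 / (1 - r) ^ 2 := sum_le_hasSum _ (fun k _ ↦ by positivity) hsum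

theorem weighted_partial_binomial_sum_bound_general (n m : ℕ) (r : ℝ)
    (hr : r = ((2 * (m : ℝ) + 2) / (2 * (n : ℝ) - 2 * (m : ℝ) - 1)) ^ 2)
    (hr1 : r < 1) :
    (∑ s ∈ Finset.Icc 1 m, (s : ℝ) * ((2 * n).choose (2 * m + 4 - 2 * s) : ℝ)) <
      ((2 * n).choose (2 * m + 2) : ℝ) * (1 / (1 - r) ^ 2) := by
  -- otherwise `|2n - 2m - 1| ≤ 2m + 1 < 2m + 2`, so `r > 1`
  have hmn : m + 1 ≤ n := by
    by_contra! h
    have hnm : (n : ℝ) ≤ m := by exact_mod_cast Nat.lt_succ_iff.mp h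
    rw [hr, div_pow, div_lt_one (by nlinarith)] at hr1
    nlinarith [(n.cast_nonneg : (0 : ℝ) ≤ n)]
  have hr' : r = ((((2 * m + 2 : ℕ) : ℝ) / ((2 * n : ℕ) - (2 * m + 2 : ℕ) + 1)) ^ 2) := by
    rw [hr]; push_cast; ring_nf
  have hr0 : 0 < r := by
    have hcN : (2 * m + 2 : ℝ) ≤ 2 * n := by exact_mod_cast (by omega : 2 * m + 2 ≤ 2 * n)
    rw [hr']; push_cast
    exact pow_pos (div_pos (by positivity) (by linarith)) 2
  have hC : 0 < ((2 * n).choose (2 * m + 2) : ℝ) := by exact_mod_cast Nat.choose_pos (by omega)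
  calc ∑ s ∈ Icc 1 m, (s : ℝ) * ((2 * n).choose (2 * m + 4 - 2 * s) : ℝ)
      = ∑ k ∈ range m, ((k : ℝ) + 1) * ((2 * n).choose (2 * m + 2 - 2 * k) : ℝ) := by
        rw [← Ico_add_one_right_eq_Icc, sum_Ico_eq_sum_range, Nat.add_sub_cancel]
        refine sum_congr rfl fun k _ ↦ ?_
        rw [show 2 * m + 4 - 2 * (1 + k) = 2 * m + 2 - 2 * k by omega]; push_cast; ring
    _ ≤ ∑ k ∈ range m, ((k : ℝ) + 1) * (r ^ k * ((2 * n).choose (2 * m + 2) : ℝ)) := by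
        refine sum_le_sum fun k hk ↦ ?_
        rw [hr']
        gcongr
        exact choose_sub_two_mul_le (by have := mem_range.mp hk; omega) (by omega)
    _ = (∑ k ∈ range m, ((k : ℝ) + 1) * r ^ k) * ((2 * n).choose (2 * m + 2) : ℝ) := by
        rw [sum_mul]; simp only [mul_assoc]
    _ < ((2 * n).choose (2 * m + 2) : ℝ) * (1 / (1 - r) ^ 2) := by
        rw [mul_comm]; exact mul_lt_mul_of_pos_left (sum_range_add_one_mul_pow_lt hr0 hr1 m) hC

/-- For `m ≤ ⌊n/2⌋ - 1` and `r = ((2m+2)/(2n-2m-1))²` (so that `0 ≤ r < 1`), the weighted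
partial sum satisfies `Σ_{s=1}^{m} s·C(2n, 2m+4-2s) < C(2n, 2m+2) · 1/(1-r)²`. -/
theorem weighted_partial_binomial_sum_bound (n m : ℕ) (r : ℝ)
    (hm : m ≤ n / 2 - 1)
    (hr : r = ((2 * (m : ℝ) + 2) / (2 * (n : ℝ) - 2 * (m : ℝ) - 1)) ^ 2)
    (hr0 : 0 ≤ r) (hr1 : r < 1) :
    (∑ s ∈ Finset.Icc 1 m, (s : ℝ) * ((2 * n).choose (2 * m + 4 - 2 * s) : ℝ)) <
      ((2 * n).choose (2 * m + 2) : ℝ) * (1 / (1 - r) ^ 2) :=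
  weighted_partial_binomial_sum_bound_general n m r hr hr1
end
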